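/- arXiv:1812.04273 — 4 statements merged into one kernel-verified Lean document; each statement's English description precedes it below -/
import Mathlib

section
/- For every polynomial G of degree at most n, sup_{x ∈ [-1,1]} |G(x)| ≤ (n+1) · sup_{x ∈ [-1,1]} |G(x)·√(1-x²)|. -/
/-!
Let `T = T_{n+1}` be the Chebyshev polynomial, with zeros `r_k = cos θ_k`. For `x` to the right of
all zeros, Lagrange interpolation at the zeros writes `G(x) = ∑ₖ G(r_k) / T'(r_k) · T(x) / (x - r_k)`
where the `T(x) / (x - r_k)` have one sign and sum to `T'(x)`; so `|G(x)| ≤ M |T'(x)|` as soon as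
`|G(r_k)| ≤ M |T'(r_k)|` for all `k`. Since `|T'(r_k)| sin θ_k = n + 1` and `|G(r_k)| sin θ_k ≤ C`,
one may take `M = C / (n + 1)`, and `|T'|` increases to the right of its zeros, to
`T'(1) = (n + 1)²`. Between the outermost zeros `±cos (π / (2(n + 1)))` the weight satisfies
`√(1 - x²) ≥ sin (π / (2(n + 1))) ≥ 1 / (n + 1)`, and the left end follows from `x ↦ -x`.
-/

open Polynomial Finset Real Lagrange

namespace Lagrange

variable {F ι : Type*} [Field F] [LinearOrder F] [IsStrictOrderedRing F]
  {s : Finset ι} {v : ι → F} {x y : F}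

theorem eval_nodal_nonneg (hx : ∀ i ∈ s, v i ≤ x) : 0 ≤ (nodal s v).eval x := by
  rw [eval_nodal]
  exact prod_nonneg fun i hi => sub_nonneg.mpr (hx i hi)

variable [DecidableEq ι]

theorem eval_derivative_nodal_nonneg (hx : ∀ i ∈ s, v i ≤ x) :
    0 ≤ (derivative (nodal s v)).eval x := by
  rw [derivative_nodal, eval_finsetSum]
  exact sum_nonneg fun i _ => eval_nodal_nonneg fun j hj => hx j (mem_of_mem_erase hj)

theorem eval_derivative_nodal_le (hx : ∀ i ∈ s, v i ≤ x) (hxy : x ≤ y) :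
    (derivative (nodal s v)).eval x ≤ (derivative (nodal s v)).eval y := by
  simp only [derivative_nodal, eval_finsetSum, eval_nodal]
  gcongr
  exact fun j hj => sub_nonneg.mpr (hx j (mem_of_mem_erase hj))

theorem abs_eval_le_mul_eval_derivative_nodal {G : F[X]} {M : F} (hvs : Set.InjOn v s)
    (hG : G.degree < #s)
    (hGs : ∀ i ∈ s, |G.eval (v i)| ≤ M * |(derivative (nodal s v)).eval (v i)|)
    (hx : ∀ i ∈ s, v i ≤ x) :
    |G.eval x| ≤ M * (derivative (nodal s v)).eval x := by
  have hterm : ∀ i ∈ s, |G.eval (v i) * (Lagrange.basis s v i).eval x|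
      ≤ M * (nodal (s.erase i) v).eval x := by
    intro i hi
    have hd : 0 < |(derivative (nodal s v)).eval (v i)| := abs_pos.mpr <| by
      simpa [nodalWeight_eq_eval_derivative_nodal hi] using nodalWeight_ne_zero hvs hi
    have hnodal : 0 ≤ (nodal (s.erase i) v).eval x :=
      eval_nodal_nonneg fun j hj => hx j (mem_of_mem_erase hj)
    rw [basis_eq_prod_sub_inv_mul_nodal_div hi, ← nodal_erase_eq_nodal_div hi, eval_mul, eval_C,
      nodalWeight_eq_eval_derivative_nodal hi, abs_mul, abs_mul, abs_inv, abs_of_nonneg hnodal,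
      ← mul_assoc, ← div_eq_mul_inv]
    exact mul_le_mul_of_nonneg_right ((div_le_iff₀ hd).mpr (hGs i hi)) hnodal
  calc |G.eval x| = |∑ i ∈ s, G.eval (v i) * (Lagrange.basis s v i).eval x| := by
        conv_lhs => rw [eq_interpolate hvs hG]
        simp only [interpolate_apply, eval_finsetSum, eval_mul, eval_C]
    _ ≤ ∑ i ∈ s, M * (nodal (s.erase i) v).eval x :=
        (abs_sum_le_sum_abs _ _).trans (sum_le_sum hterm)
    _ = M * (derivative (nodal s v)).eval x := by
        rw [← mul_sum, derivative_nodal, eval_finsetSum]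

end Lagrange

namespace Polynomial

theorem Splits.eq_C_leadingCoeff_mul_nodal {F : Type*} [Field F] [DecidableEq F] {P : F[X]}
    (hP : P.Splits) (hnd : P.roots.Nodup) : P = C P.leadingCoeff * nodal P.roots.toFinset id := by
  conv_lhs => rw [hP.eq_prod_roots]
  rw [nodal_eq, Finset.prod_eq_multiset_prod, Multiset.toFinset_val, hnd.dedup]
  rfl

variable {F : Type*} [Field F] [LinearOrder F] [IsStrictOrderedRing F] {P G : F[X]} {M x y : F}

theorem Splits.abs_eval_derivative_eq (hP : P.Splits) (hnd : P.roots.Nodup) (z : F) :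
    |(derivative P).eval z| =
      |P.leadingCoeff| * |(derivative (nodal P.roots.toFinset id)).eval z| := by
  conv_lhs => rw [hP.eq_C_leadingCoeff_mul_nodal hnd]
  rw [derivative_C_mul, eval_mul, eval_C, abs_mul]

theorem Splits.abs_eval_derivative_le (hP : P.Splits) (hnd : P.roots.Nodup)
    (hx : ∀ r ∈ P.roots, r ≤ x) (hxy : x ≤ y) :
    |(derivative P).eval x| ≤ |(derivative P).eval y| := by
  have hs : ∀ r ∈ P.roots.toFinset, id r ≤ x := fun r hr => hx r (Multiset.mem_toFinset.mp hr)
  rw [hP.abs_eval_derivative_eq hnd, hP.abs_eval_derivative_eq hnd,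
    abs_of_nonneg (eval_derivative_nodal_nonneg hs),
    abs_of_nonneg (eval_derivative_nodal_nonneg fun r hr => (hs r hr).trans hxy)]
  exact mul_le_mul_of_nonneg_left (eval_derivative_nodal_le hs hxy) (abs_nonneg _)

theorem Splits.abs_eval_le_mul_abs_eval_derivative (hP : P.Splits) (hnd : P.roots.Nodup)
    (hG : G.natDegree < P.natDegree)
    (hGP : ∀ r ∈ P.roots, |G.eval r| ≤ M * |(derivative P).eval r|)
    (hx : ∀ r ∈ P.roots, r ≤ x) :
    |G.eval x| ≤ M * |(derivative P).eval x| := by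
  have hs : ∀ r ∈ P.roots.toFinset, id r ≤ x := fun r hr => hx r (Multiset.mem_toFinset.mp hr)
  rw [hP.abs_eval_derivative_eq hnd, abs_of_nonneg (eval_derivative_nodal_nonneg hs),
    ← mul_assoc]
  refine abs_eval_le_mul_eval_derivative_nodal (Set.injOn_id _) ?_ (fun r hr => ?_) hs
  · rw [Multiset.toFinset_card_of_nodup hnd, ← hP.natDegree_eq_card_roots]
    exact degree_lt_degree hG |>.trans_le degree_le_natDegree
  · rw [mul_assoc, ← hP.abs_eval_derivative_eq hnd]
    exact hGP r (Multiset.mem_toFinset.mp hr)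

end Polynomial

namespace Polynomial.Chebyshev

variable {n : ℕ} {r : ℝ}

theorem exists_eq_cos_of_mem_roots_T_real (hr : r ∈ (T ℝ n).roots) :
    ∃ k < n, r = cos ((2 * k + 1) * π / (2 * n)) := by
  rw [roots_T_real, Finset.mem_val, Finset.mem_image] at hr
  obtain ⟨k, hk, rfl⟩ := hr
  exact ⟨k, Finset.mem_range.mp hk, rfl⟩

theorem mem_Icc_of_mem_roots_T_real (hr : r ∈ (T ℝ n).roots) : r ∈ Set.Icc (-1) 1 := by
  obtain ⟨k, -, rfl⟩ := exists_eq_cos_of_mem_roots_T_real hr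
  exact ⟨neg_one_le_cos _, cos_le_one _⟩

theorem le_cos_of_mem_roots_T_real (hr : r ∈ (T ℝ n).roots) : r ≤ cos (π / (2 * n)) := by
  obtain ⟨k, hk, rfl⟩ := exists_eq_cos_of_mem_roots_T_real hr
  have hn : (0 : ℝ) < n := by exact_mod_cast (Nat.zero_le k).trans_lt hk
  have hk' : (k : ℝ) + 1 ≤ n := by exact_mod_cast hk
  apply cos_le_cos_of_nonneg_of_le_pi (by positivity)
  · rw [div_le_iff₀ (by positivity)]
    nlinarith [pi_pos]
  · gcongr
    nlinarith [pi_pos, (k.cast_nonneg : (0 : ℝ) ≤ k)]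

theorem splits_T_real (n : ℕ) : (T ℝ n).Splits := by
  rw [splits_iff_card_roots, roots_T_real, Finset.card_val, natDegree_T, Int.natAbs_natCast,
    card_image_of_injOn ((range n).nodup_map_iff_injOn.mp (roots_T_real_nodup n)), card_range]

theorem nodup_roots_T_real (n : ℕ) : (T ℝ n).roots.Nodup := by
  rw [roots_T_real]
  exact Finset.nodup _

theorem abs_eval_derivative_T_real_mul_sqrt (hr : r ∈ (T ℝ n).roots) :
    |(derivative (T ℝ n)).eval r| * √(1 - r ^ 2) = n := by
  obtain ⟨k, -, rfl⟩ := exists_eq_cos_of_mem_roots_T_real hr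
  set θ := (2 * k + 1) * π / (2 * n)
  have hroot : cos (n * θ) = 0 := by
    simpa using isRoot_of_mem_roots hr
  have hsin : |sin (n * θ)| = 1 := (abs_eq zero_le_one).mpr (cos_eq_zero_iff_sin_eq.mp hroot)
  rw [← abs_sin_eq_sqrt_one_sub_cos_sq, T_derivative_eq_U, eval_mul, ← abs_mul, mul_assoc,
    U_real_cos]
  simp [hsin]

end Polynomial.Chebyshev

section Schur

open Polynomial.Chebyshev

variable {G : ℝ[X]} {n : ℕ} {C x : ℝ}

theorem abs_eval_le_of_cos_pi_div_le (hG : G.natDegree < n)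
    (hC : ∀ y ∈ Set.Icc (-1 : ℝ) 1, |G.eval y * √(1 - y ^ 2)| ≤ C)
    (hx : cos (π / (2 * n)) ≤ x) (hx1 : x ≤ 1) :
    |G.eval x| ≤ n * C := by
  have hn : (0 : ℝ) < n := by norm_cast; omega
  have hC0 : 0 ≤ C := (abs_nonneg _).trans (hC 0 (by norm_num))
  have hroots : ∀ r ∈ (T ℝ n).roots, r ≤ x := fun r hr => (le_cos_of_mem_roots_T_real hr).trans hx
  have hnodes : ∀ r ∈ (T ℝ n).roots, |G.eval r| ≤ C / n * |(derivative (T ℝ n)).eval r| := by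
    intro r hr
    have hT := abs_eval_derivative_T_real_mul_sqrt hr
    have hGr := hC r (mem_Icc_of_mem_roots_T_real hr)
    rw [abs_mul, abs_of_nonneg (sqrt_nonneg _)] at hGr
    rw [div_mul_eq_mul_div, le_div_iff₀ hn]
    calc |G.eval r| * n = |G.eval r| * √(1 - r ^ 2) * |(derivative (T ℝ n)).eval r| := by
          rw [← hT]; ring
      _ ≤ C * |(derivative (T ℝ n)).eval r| := by gcongr
  calc |G.eval x| ≤ C / n * |(derivative (T ℝ n)).eval x| :=
        (splits_T_real n).abs_eval_le_mul_abs_eval_derivative (nodup_roots_T_real n)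
          (by rwa [natDegree_T, Int.natAbs_natCast]) hnodes hroots
    _ ≤ C / n * |(derivative (T ℝ n)).eval 1| := by
        gcongr ?_ * ?_
        exact (splits_T_real n).abs_eval_derivative_le (nodup_roots_T_real n) hroots hx1
    _ = n * C := by
        rw [derivative_T_eval_one, Int.cast_natCast, abs_sq]
        field_simp

theorem inv_le_sqrt_one_sub_sq_of_abs_le_cos {m : ℝ} (hm : 1 ≤ m) (hx : |x| ≤ cos (π / (2 * m))) :
    m⁻¹ ≤ √(1 - x ^ 2) := by
  have hθ₀ : 0 ≤ π / (2 * m) := by positivity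
  have hθ : π / (2 * m) ≤ π / 2 := by
    gcongr
    linarith
  have hx2 : x ^ 2 ≤ cos (π / (2 * m)) ^ 2 := by
    rw [← sq_abs]
    exact pow_le_pow_left₀ (abs_nonneg x) hx 2
  calc m⁻¹ = 2 / π * (π / (2 * m)) := by field_simp
    _ ≤ sin (π / (2 * m)) := mul_le_sin hθ₀ hθ
    _ = √(1 - cos (π / (2 * m)) ^ 2) := by
        rw [← abs_sin_eq_sqrt_one_sub_cos_sq,
          abs_of_nonneg (sin_nonneg_of_nonneg_of_le_pi hθ₀ (by linarith [pi_pos]))]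
    _ ≤ √(1 - x ^ 2) := sqrt_le_sqrt (by linarith)

theorem abs_eval_le_of_abs_le_cos_pi_div (hn : n ≠ 0)
    (hC : ∀ y ∈ Set.Icc (-1 : ℝ) 1, |G.eval y * √(1 - y ^ 2)| ≤ C)
    (hx : |x| ≤ cos (π / (2 * n))) :
    |G.eval x| ≤ n * C := by
  have hn1 : (1 : ℝ) ≤ n := by exact_mod_cast Nat.one_le_iff_ne_zero.mpr hn
  have hw := inv_le_sqrt_one_sub_sq_of_abs_le_cos hn1 hx
  calc |G.eval x| ≤ |G.eval x| * (n * √(1 - x ^ 2)) := by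
        refine le_mul_of_one_le_right (abs_nonneg _) ?_
        rwa [← inv_mul_le_iff₀ (by positivity), mul_one]
    _ = n * |G.eval x * √(1 - x ^ 2)| := by
        rw [abs_mul, abs_of_nonneg (sqrt_nonneg _)]
        ring
    _ ≤ n * C := by
        gcongr
        exact hC x (abs_le.mp (hx.trans (cos_le_one _)))

theorem abs_eval_le_of_cos_pi_div_le_abs (hG : G.natDegree < n)
    (hC : ∀ y ∈ Set.Icc (-1 : ℝ) 1, |G.eval y * √(1 - y ^ 2)| ≤ C)
    (hx : cos (π / (2 * n)) ≤ |x|) (hx1 : |x| ≤ 1) :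
    |G.eval x| ≤ n * C := by
  rcases le_total 0 x with h | h
  · rw [abs_of_nonneg h] at hx hx1
    exact abs_eval_le_of_cos_pi_div_le hG hC hx hx1
  · rw [abs_of_nonpos h] at hx hx1
    have hG' : (G.comp (-X)).natDegree < n := by
      rwa [natDegree_comp, natDegree_neg, natDegree_X, mul_one]
    have hC' : ∀ y ∈ Set.Icc (-1 : ℝ) 1, |(G.comp (-X)).eval y * √(1 - y ^ 2)| ≤ C := by
      intro y hy
      rw [eval_comp, eval_neg, eval_X, ← neg_sq]
      exact hC (-y) ⟨by linarith [hy.2], by linarith [hy.1]⟩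
    simpa using abs_eval_le_of_cos_pi_div_le hG' hC' hx hx1

end Schur

/-- Schur's inequality: for a real polynomial `G` of degree at most `n`,
`sup_{x∈[-1,1]} |G(x)| ≤ (n+1) · sup_{x∈[-1,1]} |G(x)√(1-x²)|`. -/
theorem schur_inequality (G : Polynomial ℝ) (n : ℕ) (hG : G.natDegree ≤ n)
    (C : ℝ) (hC : ∀ x ∈ Set.Icc (-1 : ℝ) 1, |G.eval x * Real.sqrt (1 - x ^ 2)| ≤ C) :
    ∀ x ∈ Set.Icc (-1 : ℝ) 1, |G.eval x| ≤ ((n : ℝ) + 1) * C := by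
  intro x hx
  have hdeg : G.natDegree < n + 1 := Nat.lt_succ_of_le hG
  have hbound : |G.eval x| ≤ ((n + 1 : ℕ) : ℝ) * C := by
    rcases le_total (cos (π / (2 * (n + 1 : ℕ)))) |x| with h | h
    · exact abs_eval_le_of_cos_pi_div_le_abs hdeg hC h (abs_le.mpr hx)
    · exact abs_eval_le_of_abs_le_cos_pi_div n.succ_ne_zero hC h
  exact_mod_cast hbound
end

section
/- For every integer k ≥ 0 and every real x with x² < 1, the hypergeometric value F(1, 2/3 + k; 2 + k; x²) is bounded above by 3(1+k). -/
open Real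

/-- The Gauss hypergeometric series `F(a,b;c;z) = ∑ (a)_n (b)_n / ((c)_n n!) z^n`. -/
noncomputable def hypF (a b c z : ℝ) : ℝ :=
  ∑' n : ℕ, (ascPochhammer ℝ n).eval a * (ascPochhammer ℝ n).eval b /
    ((ascPochhammer ℝ n).eval c * (n.factorial : ℝ)) * z ^ n

/-!
Since `(1)_n = n!`, the series `F(1, b; c; z)` is `∑ (b)_n / (c)_n z^n`, and for `0 ≤ z ≤ 1` it is
dominated termwise by `∑ (b)_n / (c)_n`. The partial sums of the latter telescope:
`(c - 1 - b) ∑_{i<n} (b)_i / (c)_i = (c - 1) - (b)_n / (c)_n (c - 1 + n)`, so for `0 ≤ b` and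
`b + 1 < c` they are at most `(c - 1) / (c - 1 - b)`, which is `3 (1 + k)` for `b = 2/3 + k`,
`c = 2 + k`.
-/

lemma ascPochhammer_nonneg {b : ℝ} (hb : 0 ≤ b) (n : ℕ) : 0 ≤ (ascPochhammer ℝ n).eval b := by
  induction n with
  | zero => simp
  | succ n ih => rw [ascPochhammer_succ_eval]; positivity

lemma ascPochhammer_eval_ne_zero {c : ℝ} (hc : ∀ i : ℕ, c + i ≠ 0) (n : ℕ) :
    (ascPochhammer ℝ n).eval c ≠ 0 := by
  rw [Ne, ascPochhammer_eval_eq_zero_iff]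
  rintro ⟨i, -, hi⟩
  exact hc i (by linarith)

lemma hypF_one_left (b c z : ℝ) :
    hypF 1 b c z = ∑' n : ℕ, (ascPochhammer ℝ n).eval b / (ascPochhammer ℝ n).eval c * z ^ n := by
  unfold hypF
  congr 1 with n
  rw [ascPochhammer_eval_one, mul_comm ((ascPochhammer ℝ n).eval c),
    mul_div_mul_left _ _ (by positivity : (n.factorial : ℝ) ≠ 0)]

lemma sub_mul_sum_range_ascPochhammer_div {b c : ℝ} (hc : ∀ i : ℕ, c + i ≠ 0) (n : ℕ) :
    (c - 1 - b) * ∑ i ∈ Finset.range n, (ascPochhammer ℝ i).eval b / (ascPochhammer ℝ i).eval c =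
      c - 1 - (ascPochhammer ℝ n).eval b / (ascPochhammer ℝ n).eval c * (c - 1 + n) := by
  induction n with
  | zero => simp
  | succ n ih =>
    have hcn := ascPochhammer_eval_ne_zero hc n
    rw [Finset.sum_range_succ, mul_add, ih, ascPochhammer_succ_eval, ascPochhammer_succ_eval]
    field_simp [hc n]
    push_cast
    ring

lemma sum_range_ascPochhammer_div_le {b c : ℝ} (hb : 0 ≤ b) (hbc : b + 1 < c) (n : ℕ) :
    ∑ i ∈ Finset.range n, (ascPochhammer ℝ i).eval b / (ascPochhammer ℝ i).eval c ≤
      (c - 1) / (c - 1 - b) := by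
  have hc : 0 < c := by linarith
  have hrem : 0 ≤ (ascPochhammer ℝ n).eval b / (ascPochhammer ℝ n).eval c * (c - 1 + n) := by
    have hnum := ascPochhammer_nonneg hb n
    have hden := ascPochhammer_pos n c hc
    have hlast : 0 ≤ c - 1 + n := by linarith [n.cast_nonneg (α := ℝ)]
    positivity
  rw [le_div_iff₀' (by linarith), sub_mul_sum_range_ascPochhammer_div (fun i => by positivity)]
  linarith

lemma hypF_one_left_le {b c z : ℝ} (hb : 0 ≤ b) (hbc : b + 1 < c) (hz₀ : 0 ≤ z) (hz₁ : z ≤ 1) :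
    hypF 1 b c z ≤ (c - 1) / (c - 1 - b) := by
  have hc : 0 < c := by linarith
  have hratio (n : ℕ) : 0 ≤ (ascPochhammer ℝ n).eval b / (ascPochhammer ℝ n).eval c :=
    div_nonneg (ascPochhammer_nonneg hb n) (ascPochhammer_pos n c hc).le
  rw [hypF_one_left]
  refine Real.tsum_le_of_sum_range_le (fun n => mul_nonneg (hratio n) (pow_nonneg hz₀ n))
    fun n => le_trans (Finset.sum_le_sum fun i _ => ?_) (sum_range_ascPochhammer_div_le hb hbc n)
  exact mul_le_of_le_one_right (hratio i) (pow_le_one₀ hz₀ hz₁)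

/-- For every integer `k ≥ 0` and real `x` with `x² < 1`,
`F(1, 2/3 + k; 2 + k; x²) ≤ 3(1+k)`. -/
theorem hypF_bound (k : ℕ) (x : ℝ) (hx : x ^ 2 < 1) :
    hypF 1 (2 / 3 + k) (2 + k) (x ^ 2) ≤ 3 * (1 + (k : ℝ)) := by
  calc hypF 1 (2 / 3 + k) (2 + k) (x ^ 2)
      ≤ (2 + k - 1) / (2 + k - 1 - (2 / 3 + k)) :=
        hypF_one_left_le (by positivity) (by linarith) (sq_nonneg x) hx.le
    _ = 3 * (1 + k) := by ring
end

section
/- Let V = {(x,y) ∈ ℝ² : y³ = (1-x²)y} and E = {(x,y) ∈ V : x ∈ [-1,1]}. For every polynomial P(x,y) = G₀(x) + G₁(x)y + G₂(x)y² with G₀,G₁,G₂ real polynomials, one has sup_E |∂P/∂x| ≤ 6 (deg P)² sup_E |P|. -/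
/-!
On the circle put `x = cos θ`, `y = sin θ`, so that polynomials restricted to `E` become
trigonometric polynomials. Bernstein's inequality `‖f'‖ ≤ n ‖f‖` for a trigonometric polynomial
of degree `n` follows from M. Riesz's interpolation formula `S f'(θ) = ∑ₖ wₖ f(θ + θₖ)`, with
nodes `θₖ = (2k+1)π/(2n)` and weights `wₖ = (-1)ᵏ / sin²(θₖ/2)` for `0 ≤ k < 2n`, where
`S = ∑ₖ wₖ sin θₖ`. The value of `S` is never needed: `∑ₖ wₖ sin(mθₖ) = m S` for `m ≤ n`
because its second difference in `m` is an alternating sum that vanishes, so `S > 0` and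
`∑ₖ |wₖ| = n S`. Bernstein together with the Schur-type bound
`|q(x)| ≤ (4/3) n sup_θ |q(cos θ) sin θ|` for `deg q < n` gives Markov's inequality
`|p'| ≤ (4/3) n² ‖p‖` on `[-1, 1]`.

On `E` put `A = G₀ + (1 - x²) G₂`. Comparing `P(x, y)` with `P(x, -y)` on the circle gives
`|A| ≤ C` and `|G₁(cos θ) sin θ| ≤ C`; the segment gives `|G₀| ≤ C`, hence `|(1 - x²) G₂| ≤ 2C`.
On the circle `∂P/∂x = A' + 2x G₂ + G₁' y`. Markov bounds `A'`; since `(1 - x²) G₂` vanishes at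
`±1`, the mean value theorem and Markov for `((1 - x²) G₂)'` bound `2x G₂`; Schur and then
Bernstein bound `G₁' y`. This gives `(16/3) d² C` on the circle, and Markov alone gives
`(4/3) d² C` for `∂P/∂x = G₀'` on the segment.
-/

open Real Finset

namespace Riesz

noncomputable def node (n k : ℕ) : ℝ := (2 * k + 1) * π / (2 * n)

noncomputable def weight (n k : ℕ) : ℝ := (-1) ^ k / sin (node n k / 2) ^ 2

noncomputable def sinMoment (n : ℕ) (x : ℝ) : ℝ :=
  ∑ k ∈ range (2 * n), weight n k * sin (x * node n k)

lemma sin_half_node_pos {n k : ℕ} (hk : k < 2 * n) : 0 < sin (node n k / 2) := by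
  have hn : (0 : ℝ) < n := by exact_mod_cast (show 0 < n by omega)
  have hk' : (k : ℝ) + 1 ≤ 2 * n := by exact_mod_cast hk
  apply sin_pos_of_pos_of_lt_pi
  · unfold node; positivity
  · rw [node, div_div, div_lt_iff₀ (by positivity)]
    nlinarith [pi_pos]

lemma node_reflect {n k : ℕ} (hk : k < 2 * n) :
    node n (2 * n - 1 - k) = 2 * π - node n k := by
  have hn : (n : ℝ) ≠ 0 := by exact_mod_cast (show n ≠ 0 by omega)
  rw [node, node, Nat.cast_sub (by omega), Nat.cast_sub (by omega)]
  field_simp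
  push_cast
  ring

lemma weight_reflect {n k : ℕ} (hk : k < 2 * n) : weight n (2 * n - 1 - k) = -weight n k := by
  have hodd : (-1 : ℝ) ^ (2 * n - 1 - k) * (-1) ^ k = -1 := by
    rw [← pow_add, show 2 * n - 1 - k + k = 2 * (n - 1) + 1 by omega, pow_succ, pow_mul]
    norm_num
  have hsq : ((-1 : ℝ) ^ k) ^ 2 = 1 := by rw [← pow_mul, pow_mul']; norm_num
  have hsin : sin (node n (2 * n - 1 - k) / 2) = sin (node n k / 2) := by
    rw [node_reflect hk, show (2 * π - node n k) / 2 = π - node n k / 2 by ring, sin_pi_sub]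
  rw [weight, weight, hsin, ← neg_div]
  congr 1
  linear_combination (-1 : ℝ) ^ k * hodd - (-1 : ℝ) ^ (2 * n - 1 - k) * hsq

lemma sum_weight_mul_cos (n : ℕ) (m : ℤ) :
    ∑ k ∈ range (2 * n), weight n k * cos (m * node n k) = 0 := by
  have h := sum_range_reflect (fun k => weight n k * cos (m * node n k)) (2 * n)
  rw [sum_congr rfl fun k hk => by
      rw [weight_reflect (mem_range.mp hk), node_reflect (mem_range.mp hk),
        mul_sub, cos_int_mul_two_pi_sub, neg_mul],
    sum_neg_distrib, neg_eq_iff_eq_neg] at h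
  linarith

lemma sum_neg_one_pow_mul_sin {n m : ℕ} (hmn : m < n) :
    ∑ k ∈ range (2 * n), (-1 : ℝ) ^ k * sin (m * node n k) = 0 := by
  have hn : (0 : ℝ) < n := by exact_mod_cast (show 0 < n by omega)
  set a : ℝ := π + m * π / n
  set b : ℝ := m * π / (2 * n)
  have hterm (k : ℕ) : (-1 : ℝ) ^ k * sin (m * node n k) = sin (a * k + b) := by
    rw [← sin_add_nat_mul_pi]
    congr 1
    simp only [a, b, node]
    field_simp
    ring
  have hb : b < π / 2 := by
    rw [div_lt_div_iff₀ (by positivity) two_pos]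
    have : (m : ℝ) < n := by exact_mod_cast hmn
    nlinarith [pi_pos]
  have ha : sin (a / 2) ≠ 0 := by
    rw [show a / 2 = b + π / 2 by simp only [a, b]; field_simp; ring, sin_add_pi_div_two]
    exact (cos_pos_of_mem_Ioo ⟨by linarith [pi_pos, show 0 ≤ b by positivity], hb⟩).ne'
  have hsum := sin_mul_sum_sin (2 * n) a b
  rw [show ((2 * n : ℕ) : ℝ) * a / 2 = (n + m : ℕ) * π by
      simp only [a]; push_cast; field_simp,
    sin_nat_mul_pi, zero_mul] at hsum
  simp_rw [hterm]
  exact (mul_eq_zero.mp hsum).resolve_left ha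

lemma sin_add_add_sin_sub (x t : ℝ) :
    sin (x + t) + sin (x - t) - 2 * sin x = -4 * sin (t / 2) ^ 2 * sin x := by
  have hcos : cos t = 1 - 2 * sin (t / 2) ^ 2 := by
    rw [← cos_two_mul_eq_one_sub, mul_div_cancel₀ t two_ne_zero]
  rw [sin_add, sin_sub, hcos]
  ring

lemma sinMoment_add_two {n m : ℕ} (hm : m + 1 < n) :
    sinMoment n (m + 2) + sinMoment n m = 2 * sinMoment n (m + 1) := by
  have hterm : ∀ k ∈ range (2 * n),
      weight n k * sin ((m + 2) * node n k) + weight n k * sin (m * node n k)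
        - 2 * (weight n k * sin ((m + 1) * node n k))
        = -4 * ((-1) ^ k * sin ((m + 1 : ℕ) * node n k)) := by
    intro k hk
    have hs := (sin_half_node_pos (mem_range.mp hk)).ne'
    have key := sin_add_add_sin_sub ((m + 1) * node n k) (node n k)
    rw [show ((m : ℝ) + 1) * node n k + node n k = (m + 2) * node n k by ring,
      show ((m : ℝ) + 1) * node n k - node n k = m * node n k by ring] at key
    have hw : weight n k * sin (node n k / 2) ^ 2 = (-1) ^ k :=
      div_mul_cancel₀ _ (pow_ne_zero 2 hs)
    push_cast
    linear_combination weight n k * key - 4 * sin ((m + 1) * node n k) * hw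
  have hsum : ∑ k ∈ range (2 * n), -4 * ((-1) ^ k * sin ((m + 1 : ℕ) * node n k)) = 0 := by
    rw [← mul_sum, sum_neg_one_pow_mul_sin hm, mul_zero]
  rw [← sum_congr rfl hterm, sum_sub_distrib, sum_add_distrib, ← mul_sum] at hsum
  unfold sinMoment
  linarith

lemma sinMoment_natCast {n m : ℕ} (hm : m ≤ n) : sinMoment n m = m * sinMoment n 1 := by
  induction m using Nat.twoStepInduction with
  | zero => simp [sinMoment]
  | one => simp
  | more m ih₀ ih₁ =>
    have hrec := sinMoment_add_two (show m + 1 < n by omega)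
    rw [ih₀ (by omega)] at hrec
    push_cast at ih₁ ⊢
    rw [ih₁ (by omega)] at hrec
    linarith

lemma sinMoment_self (n : ℕ) : sinMoment n n = ∑ k ∈ range (2 * n), |weight n k| := by
  refine sum_congr rfl fun k hk => ?_
  have hn : (n : ℝ) ≠ 0 := by exact_mod_cast (show n ≠ 0 by rintro rfl; simp at hk)
  have hsin : sin (n * node n k) = (-1) ^ k := by
    rw [show (n : ℝ) * node n k = π / 2 + k * π by rw [node]; field_simp; ring,
      sin_add_nat_mul_pi, sin_pi_div_two, mul_one]
  simp only [hsin, weight, abs_div, abs_pow, abs_neg, abs_one, one_pow, sq_abs]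
  rw [div_mul_eq_mul_div, ← pow_add, ← two_mul, pow_mul]
  norm_num

lemma sinMoment_one_pos {n : ℕ} (hn : 0 < n) : 0 < sinMoment n 1 := by
  have h0 : 0 ∈ range (2 * n) := mem_range.mpr (by omega)
  have hw : 0 < |weight n 0| :=
    abs_pos.mpr (div_ne_zero (by simp) (pow_ne_zero 2 (sin_half_node_pos (mem_range.mp h0)).ne'))
  have hself : 0 < (n : ℝ) * sinMoment n 1 := by
    rw [← sinMoment_natCast le_rfl, sinMoment_self]
    exact hw.trans_le (single_le_sum (fun k _ => abs_nonneg (weight n k)) h0)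
  exact pos_of_mul_pos_right hself (Nat.cast_nonneg n)

lemma sinMoment_intCast {n : ℕ} {m : ℤ} (hm : m.natAbs ≤ n) :
    sinMoment n m = m * sinMoment n 1 := by
  obtain ⟨j, rfl | rfl⟩ := Int.eq_nat_or_neg m <;>
    simp only [Int.natAbs_neg, Int.natAbs_natCast] at hm <;> push_cast
  · exact sinMoment_natCast hm
  · rw [neg_mul, ← sinMoment_natCast hm, sinMoment, sinMoment]
    simp only [neg_mul, sin_neg, mul_neg, sum_neg_distrib]

lemma sum_weight_mul_exp {n : ℕ} {m : ℤ} (hm : m.natAbs ≤ n) :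
    ∑ k ∈ range (2 * n), (weight n k : ℂ) * Complex.exp (m * node n k * Complex.I)
      = m * sinMoment n 1 * Complex.I := by
  have hcos := congrArg Complex.ofReal (sum_weight_mul_cos n m)
  have hsin := congrArg Complex.ofReal (sinMoment_intCast hm)
  simp only [sinMoment, Complex.ofReal_sum, Complex.ofReal_mul, Complex.ofReal_cos,
    Complex.ofReal_sin, Complex.ofReal_intCast, Complex.ofReal_zero] at hcos hsin
  simp only [← Complex.ofReal_intCast, ← Complex.ofReal_mul, Complex.exp_mul_I, mul_add,
    sum_add_distrib, ← mul_assoc, ← sum_mul]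
  push_cast
  rw [hcos, hsin, sinMoment]
  push_cast
  ring

end Riesz

open Riesz

noncomputable def expMonomial (m : ℤ) (u : ℝ) : ℂ := Complex.exp (m * u * Complex.I)

noncomputable def trigPoly (n : ℕ) : Submodule ℂ (ℝ → ℂ) :=
  Submodule.span ℂ (expMonomial '' {m | m.natAbs ≤ n})

lemma expMonomial_mem_trigPoly {m : ℤ} {n : ℕ} (hm : m.natAbs ≤ n) :
    expMonomial m ∈ trigPoly n :=
  Submodule.subset_span ⟨m, hm, rfl⟩

lemma trigPoly_mono : Monotone trigPoly :=
  fun _ _ h => Submodule.span_mono (Set.image_mono fun _ hm => le_trans hm h)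

lemma expMonomial_add (m k : ℤ) : expMonomial (m + k) = expMonomial m * expMonomial k := by
  funext u
  simp only [expMonomial, Pi.mul_apply, ← Complex.exp_add]
  push_cast
  ring_nf

lemma trigPoly_mul_le (a b : ℕ) : trigPoly a * trigPoly b ≤ trigPoly (a + b) := by
  rw [trigPoly, trigPoly, Submodule.span_mul_span]
  apply Submodule.span_mono
  rintro _ ⟨_, ⟨m, hm, rfl⟩, _, ⟨k, hk, rfl⟩, rfl⟩
  exact ⟨m + k, (Int.natAbs_add_le m k).trans (add_le_add hm hk), expMonomial_add m k⟩

lemma mul_mem_trigPoly {a b : ℕ} {f g : ℝ → ℂ} (hf : f ∈ trigPoly a)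
    (hg : g ∈ trigPoly b) : f * g ∈ trigPoly (a + b) :=
  trigPoly_mul_le a b (Submodule.mul_mem_mul hf hg)

lemma pow_mem_trigPoly {a : ℕ} {f : ℝ → ℂ} (hf : f ∈ trigPoly a) (N : ℕ) :
    f ^ N ∈ trigPoly (a * N) := by
  induction N with
  | zero =>
    rw [pow_zero, mul_zero, show (1 : ℝ → ℂ) = expMonomial 0 by funext; simp [expMonomial]]
    exact expMonomial_mem_trigPoly le_rfl
  | succ N ih => rw [pow_succ, mul_add_one]; exact mul_mem_trigPoly ih hf

lemma ofReal_cos_mem_trigPoly : (fun u => ((cos u : ℝ) : ℂ)) ∈ trigPoly 1 := by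
  have h : (fun u => ((cos u : ℝ) : ℂ))
      = (1 / 2 : ℂ) • expMonomial 1 + (1 / 2 : ℂ) • expMonomial (-1) := by
    funext u
    simp only [Complex.ofReal_cos, Complex.cos, expMonomial, Pi.add_apply, Pi.smul_apply,
      smul_eq_mul]
    push_cast
    ring_nf
  rw [h]
  exact add_mem (Submodule.smul_mem _ _ (expMonomial_mem_trigPoly le_rfl))
    (Submodule.smul_mem _ _ (expMonomial_mem_trigPoly le_rfl))

lemma ofReal_sin_mem_trigPoly : (fun u => ((sin u : ℝ) : ℂ)) ∈ trigPoly 1 := by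
  have h : (fun u => ((sin u : ℝ) : ℂ))
      = (-Complex.I / 2) • expMonomial 1 + (Complex.I / 2) • expMonomial (-1) := by
    funext u
    simp only [Complex.ofReal_sin, Complex.sin, expMonomial, Pi.add_apply, Pi.smul_apply,
      smul_eq_mul]
    push_cast
    ring_nf
  rw [h]
  exact add_mem (Submodule.smul_mem _ _ (expMonomial_mem_trigPoly le_rfl))
    (Submodule.smul_mem _ _ (expMonomial_mem_trigPoly le_rfl))

lemma eval_cos_mem_trigPoly (p : Polynomial ℝ) :
    (fun u => ((p.eval (cos u) : ℝ) : ℂ)) ∈ trigPoly p.natDegree := by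
  have h : (fun u => ((p.eval (cos u) : ℝ) : ℂ))
      = ∑ i ∈ range (p.natDegree + 1),
          (p.coeff i : ℂ) • (fun u => ((cos u : ℝ) : ℂ)) ^ i := by
    funext u
    simp [Polynomial.eval_eq_sum_range, Finset.sum_apply]
  rw [h]
  refine Submodule.sum_mem _ fun i hi => Submodule.smul_mem _ _ ?_
  exact trigPoly_mono (by simpa [Nat.lt_succ_iff] using hi)
    (pow_mem_trigPoly ofReal_cos_mem_trigPoly i)

lemma hasDerivAt_expMonomial (m : ℤ) (u : ℝ) :
    HasDerivAt (expMonomial m) (m * Complex.I * expMonomial m u) u := by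
  refine (((hasDerivAt_id (u : ℂ)).const_mul (m : ℂ)).mul_const Complex.I).cexp.comp_ofReal
    |>.congr_deriv ?_
  rw [expMonomial, id, mul_one]
  ring

lemma differentiable_of_mem_trigPoly {n : ℕ} {f : ℝ → ℂ} (hf : f ∈ trigPoly n) :
    Differentiable ℝ f := by
  induction hf using Submodule.span_induction with
  | mem _ h =>
    obtain ⟨m, -, rfl⟩ := h
    exact fun u => (hasDerivAt_expMonomial m u).differentiableAt
  | zero => exact differentiable_const 0
  | add _ _ _ _ hf hg => exact hf.add hg
  | smul a _ _ hf => exact hf.const_smul a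

theorem riesz_interpolation {n : ℕ} {f : ℝ → ℂ} (hf : f ∈ trigPoly n) (θ : ℝ) :
    ∑ k ∈ range (2 * n), (weight n k : ℂ) * f (θ + node n k)
      = sinMoment n 1 * deriv f θ := by
  induction hf using Submodule.span_induction with
  | mem _ h =>
    obtain ⟨m, hm, rfl⟩ := h
    have hshift (k : ℕ) : expMonomial m (θ + node n k)
        = expMonomial m θ * Complex.exp (m * node n k * Complex.I) := by
      rw [expMonomial, expMonomial, ← Complex.exp_add]; push_cast; ring_nf
    simp_rw [hshift, (hasDerivAt_expMonomial m θ).deriv, mul_left_comm _ (expMonomial m θ),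
      ← mul_sum, sum_weight_mul_exp hm]
    ring
  | zero => simp
  | add f g hf hg ihf ihg =>
    rw [deriv_add (differentiable_of_mem_trigPoly hf θ) (differentiable_of_mem_trigPoly hg θ)]
    simp only [Pi.add_apply, mul_add, sum_add_distrib, ihf, ihg]
  | smul a f hf ihf =>
    rw [deriv_const_smul a (differentiable_of_mem_trigPoly hf θ)]
    simp only [Pi.smul_apply, smul_eq_mul, mul_left_comm _ a, ← mul_sum, ihf]

theorem norm_deriv_le_of_mem_trigPoly {n : ℕ} (hn : 0 < n) {f : ℝ → ℂ}
    (hf : f ∈ trigPoly n) {M : ℝ} (hM : ∀ u, ‖f u‖ ≤ M) (θ : ℝ) : ‖deriv f θ‖ ≤ n * M := by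
  have hS := sinMoment_one_pos hn
  refine le_of_mul_le_mul_left ?_ hS
  calc sinMoment n 1 * ‖deriv f θ‖
      = ‖∑ k ∈ range (2 * n), (weight n k : ℂ) * f (θ + node n k)‖ := by
        rw [riesz_interpolation hf, norm_mul, Complex.norm_real, norm_of_nonneg hS.le]
    _ ≤ ∑ k ∈ range (2 * n), |weight n k| * M := by
        refine norm_sum_le_of_le _ fun k _ => ?_
        rw [norm_mul, Complex.norm_real, norm_eq_abs]
        exact mul_le_mul_of_nonneg_left (hM _) (abs_nonneg _)
    _ = sinMoment n 1 * (n * M) := by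
        rw [← sum_mul, ← sinMoment_self, sinMoment_natCast le_rfl]
        ring

theorem abs_le_of_hasDerivAt_of_ofReal_mem_trigPoly {n : ℕ} (hn : 0 < n) {f : ℝ → ℝ}
    (hf : (fun u => (f u : ℂ)) ∈ trigPoly n) {M : ℝ} (hM : ∀ u, |f u| ≤ M) {f' θ : ℝ}
    (hder : HasDerivAt f f' θ) : |f'| ≤ n * M := by
  have h := norm_deriv_le_of_mem_trigPoly hn hf (fun u => by simpa using hM u) θ
  rwa [hder.ofReal_comp.deriv, Complex.norm_real, norm_eq_abs] at h

lemma abs_sub_le_of_abs_deriv_le {f f' : ℝ → ℝ} {a b K : ℝ} (hab : a ≤ b)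
    (hf : ∀ x ∈ Set.Icc a b, HasDerivAt f (f' x) x) (hK : ∀ x ∈ Set.Icc a b, |f' x| ≤ K) :
    |f b - f a| ≤ K * (b - a) := by
  simpa [norm_eq_abs] using norm_image_sub_le_of_norm_deriv_le_segment'
    (fun x hx => (hf x hx).hasDerivWithinAt) (fun x hx => hK x (Set.Ico_subset_Icc_self hx))
    b (Set.right_mem_Icc.mpr hab)

lemma le_of_mul_sin_le {n ψ Q C : ℝ} (hn : 1 ≤ n) (hψ : ψ ∈ Set.Ioc 0 (π / 2))
    (hQ : 0 ≤ Q) (h₁ : Q * sin ψ ≤ C) (h₂ : Q * sin ψ ≤ n * C * ψ) : Q ≤ 4 / 3 * n * C := by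
  obtain ⟨hψ0, hψπ⟩ := hψ
  have hC : 0 ≤ C :=
    (mul_nonneg hQ (sin_nonneg_of_nonneg_of_le_pi hψ0.le (by linarith))).trans h₁
  set t := min ψ (1 / n)
  have ht0 : 0 < t := lt_min hψ0 (by positivity)
  have ht1 : t ≤ 1 := (min_le_right _ _).trans (div_le_one_of_le₀ hn (by positivity))
  have hsin_t : 3 / 4 * t ≤ sin t := by
    nlinarith [sin_gt_sub_cube ht0, pow_le_one₀ ht0.le ht1 (n := 2)]
  have hsin_ψ : sin t ≤ sin ψ :=
    sin_le_sin_of_le_of_le_pi_div_two (by linarith [pi_pos]) hψπ (min_le_left _ _)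
  have hmin : Q * sin ψ ≤ n * C * t := by
    rw [mul_min_of_nonneg _ _ (by positivity)]
    exact le_min h₂ (by rwa [mul_right_comm, mul_one_div_cancel (by positivity), one_mul])
  have hQt : 3 / 4 * Q * t ≤ n * C * t := by
    nlinarith [mul_le_mul_of_nonneg_left (hsin_t.trans hsin_ψ) hQ]
  linarith [le_of_mul_le_mul_right hQt ht0]

section MarkovInequality

open Polynomial

lemma abs_derivative_eval_cos_mul_sin_le {p : ℝ[X]} {n : ℕ} (hn : 0 < n)
    (hp : p.natDegree ≤ n) {M : ℝ} (hM : ∀ x ∈ Set.Icc (-1 : ℝ) 1, |p.eval x| ≤ M) (θ : ℝ) :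
    |(derivative p).eval (cos θ) * sin θ| ≤ n * M := by
  have hder :
      HasDerivAt (fun u => p.eval (cos u)) (-((derivative p).eval (cos θ) * sin θ)) θ := by
    simpa [Function.comp_def] using (p.hasDerivAt (cos θ)).comp θ (hasDerivAt_cos θ)
  rw [← abs_neg]
  exact abs_le_of_hasDerivAt_of_ofReal_mem_trigPoly hn
    (trigPoly_mono hp (eval_cos_mem_trigPoly p))
    (fun u => hM _ ⟨neg_one_le_cos u, cos_le_one u⟩) hder

theorem abs_eval_le_of_abs_eval_cos_mul_sin_le {q : ℝ[X]} {n : ℕ} (hq : q.natDegree + 1 ≤ n)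
    {C : ℝ} (hC : ∀ θ, |q.eval (cos θ) * sin θ| ≤ C) :
    ∀ x ∈ Set.Icc (-1 : ℝ) 1, |q.eval x| ≤ 4 / 3 * n * C := by
  have hC0 : 0 ≤ (n : ℝ) * C := mul_nonneg n.cast_nonneg ((abs_nonneg _).trans (hC 0))
  set f : ℝ → ℝ := fun u => q.eval (cos u) * sin u
  have hder (u : ℝ) : HasDerivAt f
      (q.eval (cos u) * cos u - (derivative q).eval (cos u) * sin u ^ 2) u := by
    refine (((q.hasDerivAt (cos u)).comp u (hasDerivAt_cos u)).mul
      (hasDerivAt_sin u)).congr_deriv ?_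
    simp only [Function.comp_apply]
    ring
  have hmem : (fun u => (f u : ℂ)) ∈ trigPoly n := by
    refine trigPoly_mono hq ?_
    convert mul_mem_trigPoly (eval_cos_mem_trigPoly q) ofReal_sin_mem_trigPoly using 1
    funext u
    simp [f]
  have hderiv_le (u : ℝ) :=
    abs_le_of_hasDerivAt_of_ofReal_mem_trigPoly (by omega) hmem hC (hder u)
  have hf_le_min {θ : ℝ} (hθ : θ ∈ Set.Icc 0 π) : |f θ| ≤ n * C * min θ (π - θ) := by
    rw [mul_min_of_nonneg _ _ hC0]
    refine le_min ?_ ?_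
    · simpa [f] using abs_sub_le_of_abs_deriv_le hθ.1 (fun x _ => hder x) (fun x _ => hderiv_le x)
    · simpa [f, abs_sub_comm] using
        abs_sub_le_of_abs_deriv_le hθ.2 (fun x _ => hder x) (fun x _ => hderiv_le x)
  have hopen : ∀ x ∈ Set.Ioo (-1 : ℝ) 1, |q.eval x| ≤ 4 / 3 * n * C := by
    intro x hx
    have hθ : arccos x ∈ Set.Ioo 0 π := ⟨arccos_pos.mpr hx.2, arccos_lt_pi.mpr hx.1⟩
    have hsin : 0 < sin (arccos x) := sin_pos_of_pos_of_lt_pi hθ.1 hθ.2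
    have hfθ : |f (arccos x)| = |q.eval x| * sin (arccos x) := by
      change |q.eval (cos (arccos x)) * sin (arccos x)| = _
      rw [cos_arccos hx.1.le hx.2.le, abs_mul, abs_of_pos hsin]
    have hψ : sin (min (arccos x) (π - arccos x)) = sin (arccos x) := by
      rcases min_cases (arccos x) (π - arccos x) with ⟨h, -⟩ | ⟨h, -⟩ <;> rw [h]
      exact sin_pi_sub _
    have hψ_mem : min (arccos x) (π - arccos x) ∈ Set.Ioc 0 (π / 2) :=
      ⟨lt_min hθ.1 (by linarith [hθ.2]),
        min_le_iff.mpr ((le_or_gt (arccos x) (π / 2)).imp id fun h => by linarith)⟩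
    refine le_of_mul_sin_le (by exact_mod_cast (by omega : 1 ≤ n)) hψ_mem (abs_nonneg _) ?_ ?_
      <;> rw [hψ, ← hfθ]
    · exact hC _
    · exact hf_le_min ⟨hθ.1.le, hθ.2.le⟩
  intro x hx
  rw [← closure_Ioo (by norm_num : (-1 : ℝ) ≠ 1)] at hx
  exact le_on_closure hopen q.continuous.abs.continuousOn continuousOn_const hx

theorem abs_derivative_eval_le {p : ℝ[X]} {n : ℕ} (hn : 0 < n) (hp : p.natDegree ≤ n)
    {M : ℝ} (hM : ∀ x ∈ Set.Icc (-1 : ℝ) 1, |p.eval x| ≤ M) :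
    ∀ x ∈ Set.Icc (-1 : ℝ) 1, |(derivative p).eval x| ≤ 4 / 3 * n ^ 2 * M := by
  have hdeg : (derivative p).natDegree + 1 ≤ n := by have := natDegree_derivative_le p; omega
  intro x hx
  exact (abs_eval_le_of_abs_eval_cos_mul_sin_le hdeg
    (abs_derivative_eval_cos_mul_sin_le hn hp hM) x hx).trans_eq (by ring)

lemma abs_two_mul_eval_le {q : ℝ[X]} {K : ℝ}
    (hK : ∀ x ∈ Set.Icc (-1 : ℝ) 1, |(derivative (q * (1 - X ^ 2))).eval x| ≤ K) :
    ∀ x ∈ Set.Icc (-1 : ℝ) 1, |2 * x * q.eval x| ≤ K := by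
  set B := q * (1 - X ^ 2)
  have hB (x : ℝ) : B.eval x = q.eval x * (1 - x) * (1 + x) := by
    simp only [eval_mul, eval_sub, eval_one, eval_pow, eval_X, B]
    ring
  have hopen : ∀ x ∈ Set.Ioo (-1 : ℝ) 1, |2 * x * q.eval x| ≤ K := by
    intro x hx
    have hpos₁ : 0 < 1 - x := sub_pos.2 hx.2
    have hpos₂ : 0 < 1 + x := by linarith [hx.1]
    have habs : |B.eval x| = |q.eval x| * (1 - x) * (1 + x) := by
      rw [hB, abs_mul, abs_mul, abs_of_pos hpos₁, abs_of_pos hpos₂]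
    have h₁ := abs_sub_le_of_abs_deriv_le hx.2.le (fun y _ => B.hasDerivAt y)
      (fun y hy => hK y ⟨hx.1.le.trans hy.1, hy.2⟩)
    have h₂ := abs_sub_le_of_abs_deriv_le hx.1.le (fun y _ => B.hasDerivAt y)
      (fun y hy => hK y ⟨hy.1, hy.2.trans hx.2.le⟩)
    rw [hB 1, sub_self, mul_zero, zero_mul, zero_sub, abs_neg, habs] at h₁
    rw [hB (-1), add_neg_cancel, mul_zero, sub_zero, habs] at h₂
    set a := |q.eval x| with ha
    have hu : a * (1 + x) ≤ K := le_of_mul_le_mul_right (by linarith) hpos₁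
    have hv : a * (1 - x) ≤ K := le_of_mul_le_mul_right (by linarith) hpos₂
    calc |2 * x * q.eval x| = |a * (1 + x) - a * (1 - x)| := by
          rw [show a * (1 + x) - a * (1 - x) = 2 * x * a by ring, ha]
          simp only [abs_mul, abs_abs]
      _ ≤ K := abs_sub_le_of_nonneg_of_le (mul_nonneg (abs_nonneg _) hpos₂.le) hu
          (mul_nonneg (abs_nonneg _) hpos₁.le) hv
  intro x hx
  rw [← closure_Ioo (by norm_num : (-1 : ℝ) ≠ 1)] at hx
  exact le_on_closure hopen (by fun_prop) continuousOn_const hx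

end MarkovInequality

/-- The compact set `E = {(x,y) : y³ = (1-x²)y, x ∈ [-1,1]}`. -/
def E8 : Set (ℝ × ℝ) := {p | p.2 ^ 3 = (1 - p.1 ^ 2) * p.2 ∧ p.1 ∈ Set.Icc (-1 : ℝ) 1}

lemma mk_zero_mem_E8 {x : ℝ} (hx : x ∈ Set.Icc (-1 : ℝ) 1) : (x, 0) ∈ E8 :=
  ⟨by ring, hx⟩

lemma cos_sin_mem_E8 (θ : ℝ) : (cos θ, sin θ) ∈ E8 :=
  ⟨by linear_combination sin θ * sin_sq_add_cos_sq θ, neg_one_le_cos θ, cos_le_one θ⟩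

lemma snd_eq_zero_or_exists_eq_cos_sin_of_mem_E8 {p : ℝ × ℝ} (hp : p ∈ E8) :
    p.2 = 0 ∨ ∃ θ, p = (cos θ, sin θ) := by
  refine or_iff_not_imp_left.mpr fun hy => ?_
  have hcircle : p.2 ^ 2 = 1 - p.1 ^ 2 := mul_right_cancel₀ hy (by linear_combination hp.1)
  obtain ⟨θ, hθ⟩ := (Complex.norm_eq_one_iff ⟨p.1, p.2⟩).mp <| by
    rw [Complex.norm_eq_sqrt_sq_add_sq, hcircle, add_sub_cancel, sqrt_one]
  exact ⟨θ, Prod.ext (by simpa using congrArg Complex.re hθ.symm)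
    (by simpa using congrArg Complex.im hθ.symm)⟩

lemma abs_le_of_abs_add_le_of_abs_sub_le {a b C : ℝ} (h₁ : |a + b| ≤ C)
    (h₂ : |a - b| ≤ C) : |a| ≤ C ∧ |b| ≤ C := by
  rw [abs_le] at h₁ h₂
  exact ⟨abs_le.mpr ⟨by linarith, by linarith⟩, abs_le.mpr ⟨by linarith, by linarith⟩⟩

section OnE8

open Polynomial

variable {G₀ G₁ G₂ : ℝ[X]} {C : ℝ}

lemma abs_evenPart_le_and_abs_oddPart_le_on_circle
    (hcirc : ∀ θ,
      |G₀.eval (cos θ) + G₁.eval (cos θ) * sin θ + G₂.eval (cos θ) * sin θ ^ 2| ≤ C)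
    (θ : ℝ) :
    |(G₀ + G₂ * (1 - X ^ 2)).eval (cos θ)| ≤ C ∧ |G₁.eval (cos θ) * sin θ| ≤ C := by
  have hsplit (y : ℝ) : G₀.eval (cos θ) + G₁.eval (cos θ) * y + G₂.eval (cos θ) * sin θ ^ 2
      = (G₀ + G₂ * (1 - X ^ 2)).eval (cos θ) + G₁.eval (cos θ) * y := by
    simp only [sin_sq, eval_add, eval_mul, eval_sub, eval_one, eval_pow, eval_X]
    ring
  have h₁ := hcirc θ
  have h₂ := hcirc (-θ)
  rw [cos_neg, sin_neg, neg_sq, hsplit] at h₂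
  rw [hsplit] at h₁
  rw [mul_neg, ← sub_eq_add_neg] at h₂
  exact abs_le_of_abs_add_le_of_abs_sub_le h₁ h₂

lemma abs_derivX_le_on_circle {d : ℕ} (hd₀ : G₀.natDegree ≤ d)
    (hd₁ : G₁.natDegree + 1 ≤ d) (hd₂ : G₂.natDegree + 2 ≤ d)
    (hseg : ∀ x ∈ Set.Icc (-1 : ℝ) 1, |G₀.eval x| ≤ C)
    (hcirc : ∀ θ,
      |G₀.eval (cos θ) + G₁.eval (cos θ) * sin θ + G₂.eval (cos θ) * sin θ ^ 2| ≤ C)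
    (θ : ℝ) :
    |(derivative G₀).eval (cos θ) + (derivative G₁).eval (cos θ) * sin θ
        + (derivative G₂).eval (cos θ) * sin θ ^ 2| ≤ 16 / 3 * d ^ 2 * C := by
  have hd : 0 < d := by omega
  have hx : cos θ ∈ Set.Icc (-1 : ℝ) 1 := ⟨neg_one_le_cos θ, cos_le_one θ⟩
  set B := G₂ * (1 - X ^ 2)
  have hdegB : B.natDegree ≤ d :=
    natDegree_mul_le.trans <| by
      have : (1 - X ^ 2 : ℝ[X]).natDegree ≤ 2 := (natDegree_sub_le _ _).trans (by simp)
      omega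
  have hA : ∀ x ∈ Set.Icc (-1 : ℝ) 1, |(G₀ + B).eval x| ≤ C := fun x hx => by
    simpa [B, cos_arccos hx.1 hx.2] using
      (abs_evenPart_le_and_abs_oddPart_le_on_circle hcirc (arccos x)).1
  have hB : ∀ x ∈ Set.Icc (-1 : ℝ) 1, |B.eval x| ≤ 2 * C := fun x hx => by
    have h := abs_sub ((G₀ + B).eval x) (G₀.eval x)
    have hAx := hA x hx
    simp only [eval_add, add_sub_cancel_left] at h hAx
    linarith [hseg x hx]
  have hG₁ : ∀ x ∈ Set.Icc (-1 : ℝ) 1, |G₁.eval x| ≤ 4 / 3 * d * C :=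
    abs_eval_le_of_abs_eval_cos_mul_sin_le hd₁
      fun θ => (abs_evenPart_le_and_abs_oddPart_le_on_circle hcirc θ).2
  have h₁ := abs_derivative_eval_le hd ((natDegree_add_le _ _).trans (max_le hd₀ hdegB)) hA _ hx
  have h₂ := abs_two_mul_eval_le (abs_derivative_eval_le hd hdegB hB) _ hx
  have h₃ := abs_derivative_eval_cos_mul_sin_le hd (by omega : G₁.natDegree ≤ d) hG₁ θ
  have hsplit : (derivative G₀).eval (cos θ) + (derivative G₁).eval (cos θ) * sin θ
        + (derivative G₂).eval (cos θ) * sin θ ^ 2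
      = (derivative (G₀ + B)).eval (cos θ) + 2 * cos θ * G₂.eval (cos θ)
        + (derivative G₁).eval (cos θ) * sin θ := by
    simp only [B, sin_sq, derivative_mul, derivative_sub, derivative_one,
      derivative_X_pow_succ, Nat.cast_one, map_add, map_one, pow_one, zero_sub, mul_neg, eval_add,
      eval_mul, eval_sub, eval_one, eval_pow, eval_X, eval_neg]
    ring
  rw [hsplit]
  refine (abs_add_three _ _ _).trans ?_
  linarith

end OnE8

/-- For `P(x,y) = G₀(x) + G₁(x)y + G₂(x)y²`, one has
`sup_E |∂P/∂x| ≤ 6 (deg P)² sup_E |P|`. -/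
theorem markov_x_on_E8 (G₀ G₁ G₂ : Polynomial ℝ) (C : ℝ)
    (hC : ∀ p ∈ E8, |G₀.eval p.1 + G₁.eval p.1 * p.2 + G₂.eval p.1 * p.2 ^ 2| ≤ C) :
    ∀ p ∈ E8,
      |(Polynomial.derivative G₀).eval p.1 + (Polynomial.derivative G₁).eval p.1 * p.2 +
          (Polynomial.derivative G₂).eval p.1 * p.2 ^ 2|
        ≤ 6 * ((max (max G₀.natDegree (G₁.natDegree + 1)) (G₂.natDegree + 2) : ℕ) : ℝ) ^ 2 * C := by
  set d := max (max G₀.natDegree (G₁.natDegree + 1)) (G₂.natDegree + 2)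
  have hd₀ : G₀.natDegree ≤ d := by omega
  have hd₁ : G₁.natDegree + 1 ≤ d := by omega
  have hd₂ : G₂.natDegree + 2 ≤ d := by omega
  have hseg (x : ℝ) (hx : x ∈ Set.Icc (-1 : ℝ) 1) : |G₀.eval x| ≤ C := by
    simpa using hC _ (mk_zero_mem_E8 hx)
  have hC₀ : 0 ≤ C := (abs_nonneg _).trans (hseg 0 (by norm_num))
  intro p hp
  rcases snd_eq_zero_or_exists_eq_cos_sin_of_mem_E8 hp with hy | ⟨θ, rfl⟩
  · have hmarkov := abs_derivative_eval_le (by omega) hd₀ hseg p.1 hp.2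
    simp only [hy, mul_zero, ne_eq, OfNat.ofNat_ne_zero, not_false_eq_true, zero_pow, add_zero]
    nlinarith [sq_nonneg (d : ℝ)]
  · have hcircle :=
      abs_derivX_le_on_circle hd₀ hd₁ hd₂ hseg (fun θ => hC _ (cos_sin_mem_E8 θ)) θ
    dsimp only
    nlinarith [sq_nonneg (d : ℝ)]
end

section
/- Let E ⊂ ℝ^N be compact and contained in V, and suppose E is a 𝒫(y)⊗𝒫_{d-1}(x_k)-Markov set with constants M, m. Then there is a constant C > 0 depending only on E and d such that for every polynomial P = ∑_{i=0}^{d-1} G_i(y) x_k^i, ‖G_i‖_{π(E)} ≤ (C/i!) (deg P)^{m(d-1)} ‖P‖_E for each i = 0,…,d-1, where π(E) is the projection of E onto the y = (x_1,…,x_{k-1},x_{k+1},…,x_N) coordinates. -/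
/-!
Fix `z ∈ E`, write `y` for its coordinates other than the `k`-th and `x = z k`. Along the line
through `z` in the direction `e_k`, `P` restricts to the one-variable polynomial
`Q = ∑ G_i(y) X^i` of degree `< d`, whose derivatives at `x` are the partial derivatives
`∂_k^s P(z)`. Taylor-expanding `Q^{(i)}` around `x` and evaluating at `0` inverts the triangular
system: `i! G_i(y) = ∑_{r < d - i} ∂_k^{i+r} P(z) (-x)^r / r!`. Each term is bounded by the
Markov inequality, and `|x|` is bounded on the compact set `E`.
-/

/-- Partial derivative in direction `i` of a function on `ℝ^N`. -/
noncomputable def pd {N : ℕ} (i : Fin N) (f : (Fin N → ℝ) → ℝ) : (Fin N → ℝ) → ℝ :=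
  fun x => fderiv ℝ f x (Pi.single i 1)

/-- Iterated partial derivative `D^α` for a multi-index `α`. -/
noncomputable def mderiv {N : ℕ} (α : Fin N → ℕ) (f : (Fin N → ℝ) → ℝ) : (Fin N → ℝ) → ℝ :=
  (List.finRange N).foldr (fun i g => (pd i)^[α i] g) f

/-- The polynomial function `P(z) = ∑_{i=0}^{d-1} G_i(y) x_k^i`, where `y` denotes the
coordinates of `z` other than the `k`-th one. -/
noncomputable def Pfun {n d : ℕ} (k : Fin (n + 1)) (G : Fin d → MvPolynomial (Fin n) ℝ) :
    (Fin (n + 1) → ℝ) → ℝ :=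
  fun z => ∑ i : Fin d, MvPolynomial.eval (fun j => z (k.succAbove j)) (G i) * z k ^ (i : ℕ)

/-- `deg P = max_i (deg G_i + i)`. -/
def degP {n d : ℕ} (G : Fin d → MvPolynomial (Fin n) ℝ) : ℕ :=
  Finset.univ.sup fun i : Fin d => (G i).totalDegree + (i : ℕ)

/-- The projection of `E` forgetting the `k`-th coordinate. -/
def projE {n : ℕ} (k : Fin (n + 1)) (E : Set (Fin (n + 1) → ℝ)) : Set (Fin n → ℝ) :=
  (fun z (j : Fin n) => z (k.succAbove j)) '' E

open Polynomial Finset Nat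

theorem Polynomial.factorial_mul_coeff_eq_sum {K : Type*} [Field K] [CharZero K] {Q : K[X]}
    {d i : ℕ} (hQ : Q.natDegree < d) (hi : i < d) (x : K) :
    (i ! : K) * Q.coeff i
      = ∑ r ∈ range (d - i), (derivative^[i + r] Q).eval x * (-x) ^ r / r ! := by
  set H := hasseDeriv i Q
  have hH : (taylor x H).natDegree < d - i := by
    rw [natDegree_taylor]
    exact (natDegree_hasseDeriv_le Q i).trans_lt (by omega)
  have hcoeff : Q.coeff i = (taylor x H).eval (-x) := by
    rw [taylor_eval, neg_add_cancel, ← coeff_zero_eq_eval_zero, hasseDeriv_coeff]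
    simp
  rw [hcoeff, eval_eq_sum_range' hH, mul_sum]
  refine sum_congr rfl fun r _ => ?_
  have hderiv : (derivative^[i + r] Q).eval x
      = ((i + r)! : K) * (hasseDeriv (i + r) Q).eval x := by
    rw [← factorial_smul_hasseDeriv]
    simp [nsmul_eq_mul]
  have hchoose : ((i + r).choose r * i ! * r ! : K) = (i + r)! := by
    exact_mod_cast add_choose_mul_factorial_mul_factorial i r
  have hr : (r ! : K) ≠ 0 := Nat.cast_ne_zero.mpr (factorial_ne_zero r)
  rw [taylor_coeff, ← LinearMap.comp_apply, hasseDeriv_comp, hderiv, add_comm r i, ← hchoose,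
    LinearMap.smul_apply, eval_smul, nsmul_eq_mul]
  field_simp

theorem Polynomial.factorial_mul_abs_coeff_le {Q : ℝ[X]} {d i : ℕ} (hQ : Q.natDegree < d)
    (hi : i < d) {x R B : ℝ} (hx : |x| ≤ R) (hR : 1 ≤ R)
    (hB : ∀ s < d, |(derivative^[s] Q).eval x| ≤ B) :
    (i ! : ℝ) * |Q.coeff i| ≤ d * R ^ (d - 1) * B := by
  have hB0 : 0 ≤ B := (abs_nonneg _).trans (hB 0 (by omega))
  have hterm : ∀ r ∈ range (d - i),
      |(derivative^[i + r] Q).eval x * (-x) ^ r / r !| ≤ R ^ (d - 1) * B := by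
    intro r hr
    rw [mem_range] at hr
    rw [abs_div, abs_mul, abs_pow, abs_neg, Nat.abs_cast, div_le_iff₀ (by positivity)]
    calc |(derivative^[i + r] Q).eval x| * |x| ^ r
        ≤ B * R ^ (d - 1) :=
          mul_le_mul (hB _ (by omega)) ((pow_le_pow_left₀ (abs_nonneg x) hx r).trans
            (pow_le_pow_right₀ hR (by omega))) (by positivity) hB0
      _ ≤ R ^ (d - 1) * B * r ! := by
          rw [mul_comm B]
          exact le_mul_of_one_le_right (by positivity) (by exact_mod_cast r.factorial_pos)
  calc (i ! : ℝ) * |Q.coeff i| = |(i ! : ℝ) * Q.coeff i| := by rw [abs_mul, Nat.abs_cast]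
    _ ≤ ∑ r ∈ range (d - i), R ^ (d - 1) * B := by
        rw [factorial_mul_coeff_eq_sum hQ hi]
        exact (abs_sum_le_sum_abs _ _).trans (sum_le_sum hterm)
    _ ≤ d * R ^ (d - 1) * B := by
        rw [sum_const, card_range, nsmul_eq_mul, mul_assoc]
        gcongr
        exact_mod_cast Nat.sub_le d i

theorem Polynomial.coeff_sum_fin_C_mul_X_pow {R : Type*} [Semiring R] {d : ℕ} (a : Fin d → R)
    (i : Fin d) : (∑ j : Fin d, C (a j) * X ^ (j : ℕ)).coeff i = a i := by
  simp [coeff_C_mul, coeff_X_pow, Fin.val_inj]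

theorem Polynomial.natDegree_sum_fin_C_mul_X_pow_lt {R : Type*} [Semiring R] {d : ℕ}
    (a : Fin d → R) (hd : 0 < d) : (∑ j : Fin d, C (a j) * X ^ (j : ℕ)).natDegree < d := by
  by_cases h0 : ∑ j : Fin d, C (a j) * X ^ (j : ℕ) = 0
  · rw [h0, natDegree_zero]
    exact hd
  · exact (natDegree_lt_iff_degree_lt h0).mpr (degree_sum_fin_lt a)

theorem mderiv_pi_single {N : ℕ} (k : Fin N) (r : ℕ) (f : (Fin N → ℝ) → ℝ) :
    mderiv (Pi.single k r) f = (pd k)^[r] f := by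
  have hfoldr : ∀ l : List (Fin N), l.Nodup →
      l.foldr (fun i g => (pd i)^[(Pi.single k r : Fin N → ℕ) i] g) f
        = if k ∈ l then (pd k)^[r] f else f := by
    intro l hl
    induction l with
    | nil => simp
    | cons a l ih =>
      obtain ⟨ha, hl⟩ := List.nodup_cons.mp hl
      by_cases hak : a = k
      · subst hak
        simp [ih hl, ha]
      · simp [ih hl, Ne.symm hak]
  simpa [mderiv] using hfoldr _ (List.nodup_finRange N)

/-- The function `z ↦ p(y, z k)` for `p ∈ ℝ[y][X]`, where `y` are the coordinates of `z`
other than the `k`-th. -/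
noncomputable def polyFun {n : ℕ} (k : Fin (n + 1)) (p : (MvPolynomial (Fin n) ℝ)[X]) :
    (Fin (n + 1) → ℝ) → ℝ :=
  fun z => (p.map (MvPolynomial.eval fun j => z (k.succAbove j))).eval (z k)

section polyFun

variable {n : ℕ} (k : Fin (n + 1)) (p : (MvPolynomial (Fin n) ℝ)[X])

theorem polyFun_update (z : Fin (n + 1) → ℝ) (t : ℝ) :
    polyFun k p (Function.update z k t)
      = (p.map (MvPolynomial.eval fun j => z (k.succAbove j))).eval t := by
  simp [polyFun]

theorem differentiable_polyFun : Differentiable ℝ (polyFun k p) := by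
  induction p using Polynomial.induction_on' with
  | add p q hp hq =>
    have hadd : polyFun k (p + q) = polyFun k p + polyFun k q := by
      ext z
      simp [polyFun]
    rw [hadd]
    exact hp.add hq
  | monomial i a =>
    have ha : Differentiable ℝ fun z : Fin (n + 1) → ℝ =>
        MvPolynomial.eval (fun j => z (k.succAbove j)) a := fun z =>
      (AnalyticOnNhd.eval_continuousLinearMap'
        (fun j => (ContinuousLinearMap.proj (k.succAbove j) : (Fin (n + 1) → ℝ) →L[ℝ] ℝ)) a z
        trivial).differentiableAt
    unfold polyFun
    simp only [map_monomial, eval_monomial]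
    exact ha.mul ((differentiable_apply k).pow i)

theorem pd_polyFun : pd k (polyFun k p) = polyFun k (derivative p) := by
  funext z
  have hline := (differentiable_polyFun k p _).hasFDerivAt.comp_hasDerivAt (z k)
    (hasDerivAt_update z k (z k))
  rw [Function.update_eq_self] at hline
  have hpoly : HasDerivAt (fun t => polyFun k p (Function.update z k t))
      ((derivative (p.map (MvPolynomial.eval fun j => z (k.succAbove j)))).eval (z k)) (z k) := by
    simp only [polyFun_update]
    exact Polynomial.hasDerivAt _ _
  rw [pd, hline.unique hpoly, polyFun, derivative_map]

theorem iterate_pd_polyFun (r : ℕ) :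
    (pd k)^[r] (polyFun k p) = polyFun k (derivative^[r] p) := by
  induction r generalizing p with
  | zero => rfl
  | succ r ih => rw [Function.iterate_succ_apply, pd_polyFun, ih, ← Function.iterate_succ_apply]

end polyFun

section Pfun

variable {n d : ℕ} (k : Fin (n + 1)) (G : Fin d → MvPolynomial (Fin n) ℝ)

theorem Pfun_eq_polyFun : Pfun k G = polyFun k (∑ i : Fin d, C (G i) * X ^ (i : ℕ)) := by
  funext z
  simp [Pfun, polyFun, Polynomial.map_sum, eval_finsetSum]

theorem mderiv_pi_single_Pfun (s : ℕ) (z : Fin (n + 1) → ℝ) :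
    mderiv (Pi.single k s) (Pfun k G) z
      = (derivative^[s] (∑ i : Fin d,
          C (MvPolynomial.eval (fun j => z (k.succAbove j)) (G i)) * X ^ (i : ℕ))).eval (z k) := by
  rw [mderiv_pi_single, Pfun_eq_polyFun, iterate_pd_polyFun, polyFun, ← iterate_derivative_map]
  simp [Polynomial.map_sum]

theorem le_degP (i : Fin d) : (i : ℕ) ≤ degP G :=
  (Nat.le_add_left _ _).trans
    (Finset.le_sup (f := fun i : Fin d => (G i).totalDegree + (i : ℕ)) (mem_univ i))

theorem rpow_degP_le {m : ℝ} (hm : 0 ≤ m) {s : ℕ} (hs : s < d) :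
    (degP G : ℝ) ^ (m * s) ≤ (degP G : ℝ) ^ (m * ((d : ℝ) - 1)) := by
  rcases (degP G).eq_zero_or_pos with h0 | hpos
  · have hd : d = 1 := by
      have := le_degP G ⟨d - 1, by omega⟩
      simp only [h0] at this
      omega
    have hs0 : s = 0 := by omega
    simp [hd, hs0]
  · apply Real.rpow_le_rpow_of_exponent_le (by exact_mod_cast hpos)
    have : (s : ℝ) ≤ (d : ℝ) - 1 := by
      rw [le_sub_iff_add_le]
      exact_mod_cast hs
    exact mul_le_mul_of_nonneg_left this hm

end Pfun

theorem coefficient_bounds_of_Markov_general (n d : ℕ) (hd : 1 ≤ d) (k : Fin (n + 1))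
    (E : Set (Fin (n + 1) → ℝ)) (hE : IsCompact E)
    (M m : ℝ) (hM : 0 < M) (hm : 0 < m)
    (hMarkov : ∀ G : Fin d → MvPolynomial (Fin n) ℝ, ∀ α : Fin (n + 1) → ℕ, ∀ C : ℝ,
      (∀ z ∈ E, |Pfun k G z| ≤ C) →
      ∀ z ∈ E, |mderiv α (Pfun k G) z|
        ≤ M ^ (∑ i, α i) * ((degP G : ℝ)) ^ (m * ((∑ i, α i : ℕ) : ℝ)) * C) :
    ∃ C : ℝ, 0 < C ∧
      ∀ G : Fin d → MvPolynomial (Fin n) ℝ, ∀ D : ℝ,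
        (∀ z ∈ E, |Pfun k G z| ≤ D) →
        ∀ i : Fin d, ∀ y ∈ projE k E,
          |MvPolynomial.eval y (G i)|
            ≤ C / ((i : ℕ).factorial : ℝ) * ((degP G : ℝ)) ^ (m * ((d : ℝ) - 1)) * D := by
  obtain ⟨R, hR⟩ := hE.exists_bound_of_continuousOn (continuous_apply k).continuousOn
  refine ⟨d * max R 1 ^ (d - 1) * max M 1 ^ (d - 1), by positivity, ?_⟩
  rintro G D hD i _ ⟨z, hz, rfl⟩
  have hD0 : 0 ≤ D := (abs_nonneg _).trans (hD z hz)
  set Q : ℝ[X] := ∑ i : Fin d,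
    C (MvPolynomial.eval (fun j => z (k.succAbove j)) (G i)) * X ^ (i : ℕ) with hQ
  have hB : ∀ s < d, |(derivative^[s] Q).eval (z k)|
      ≤ max M 1 ^ (d - 1) * (degP G : ℝ) ^ (m * ((d : ℝ) - 1)) * D := by
    intro s hs
    have hMs : M ^ s ≤ max M 1 ^ (d - 1) :=
      (pow_le_pow_left₀ hM.le (le_max_left M 1) s).trans
        (pow_le_pow_right₀ (le_max_right M 1) (by omega))
    rw [hQ, ← mderiv_pi_single_Pfun]
    refine (hMarkov G (Pi.single k s) D hD z hz).trans ?_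
    rw [sum_pi_single']
    simp only [mem_univ, if_true]
    exact mul_le_mul_of_nonneg_right
      (mul_le_mul hMs (rpow_degP_le G hm.le hs) (by positivity) (by positivity)) hD0
  have hbound := factorial_mul_abs_coeff_le (natDegree_sum_fin_C_mul_X_pow_lt _ i.pos)
    i.isLt ((Real.norm_eq_abs _ ▸ hR z hz).trans (le_max_left R 1)) (le_max_right R 1) hB
  rw [coeff_sum_fin_C_mul_X_pow] at hbound
  rw [div_mul_eq_mul_div, div_mul_eq_mul_div, le_div_iff₀ (by positivity)]
  linarith

/-- If a compact `E ⊂ ℝ^N` is a `𝒫(y)⊗𝒫_{d-1}(x_k)`-Markov set with constants `M, m`, then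
there is `C > 0` (depending only on `E` and `d`) such that for every
`P = ∑_{i<d} G_i(y) x_k^i`, `‖G_i‖_{π(E)} ≤ (C/i!) (deg P)^{m(d-1)} ‖P‖_E` for each `i`. -/
theorem coefficient_bounds_of_Markov (n d : ℕ) (hd : 1 ≤ d) (k : Fin (n + 1))
    (E : Set (Fin (n + 1) → ℝ)) (hE : IsCompact E) (hEne : E.Nonempty)
    (M m : ℝ) (hM : 0 < M) (hm : 0 < m)
    (hMarkov : ∀ G : Fin d → MvPolynomial (Fin n) ℝ, ∀ α : Fin (n + 1) → ℕ, ∀ C : ℝ,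
      (∀ z ∈ E, |Pfun k G z| ≤ C) →
      ∀ z ∈ E, |mderiv α (Pfun k G) z|
        ≤ M ^ (∑ i, α i) * ((degP G : ℝ)) ^ (m * ((∑ i, α i : ℕ) : ℝ)) * C) :
    ∃ C : ℝ, 0 < C ∧
      ∀ G : Fin d → MvPolynomial (Fin n) ℝ, ∀ D : ℝ,
        (∀ z ∈ E, |Pfun k G z| ≤ D) →
        ∀ i : Fin d, ∀ y ∈ projE k E,
          |MvPolynomial.eval y (G i)|
            ≤ C / ((i : ℕ).factorial : ℝ) * ((degP G : ℝ)) ^ (m * ((d : ℝ) - 1)) * D :=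
  coefficient_bounds_of_Markov_general n d hd k E hE M m hM hm hMarkov
end
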